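/- arXiv:1504.07923 — 3 statements merged into one kernel-verified Lean document; each statement's English description precedes it below -/
import Mathlib

section
/- For every δ > 0 and every x ∈ D(δ), exp(θ(x|δ)) = sin(x − iδ)/sin(x + iδ); moreover, if in addition −π < Re x < 0, then θ(x|δ) = Log(sin(x − iδ)/sin(x + iδ)), where Log is the principal complex logarithm (imaginary part in (−π, π]). Thus θ(·|δ) is a determination of the logarithm of sin(x − iδ)/sin(x + iδ) coinciding with the principal branch in the strip −π < Re x < 0. -/
/-- The kernel `K(x|δ) = (1/(2πi))·(cot(x − iδ) − cot(x + iδ))`. -/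
noncomputable def Kker (δ : ℝ) (x : ℂ) : ℂ :=
  (1 / (2 * (Real.pi : ℂ) * Complex.I)) *
    (Complex.cot (x - Complex.I * δ) - Complex.cot (x + Complex.I * δ))

/-- The cut domain `D(δ)`: the plane minus the four horizontal rays
`{t ± iδ : t ≥ 0}` and `{t ± iδ : t ≤ −π}`. -/
def Ddom (δ : ℝ) : Set ℂ :=
  {x | ¬ ((x.im = δ ∨ x.im = -δ) ∧ (0 ≤ x.re ∨ x.re ≤ -Real.pi))}

/-- `θ(x|δ)`: `2πi` times the integral of `K(·|δ)` along the contour running from `−π/2`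
vertically to `−π/2 + i·Im x` and then horizontally to `x`. -/
noncomputable def thetaFn (δ : ℝ) (x : ℂ) : ℂ :=
  2 * (Real.pi : ℂ) * Complex.I *
    (Complex.I * (∫ t in (0:ℝ)..x.im, Kker δ ((-(Real.pi/2) : ℝ) + Complex.I * (t : ℂ)))
      + ∫ u in (-(Real.pi/2) : ℝ)..x.re, Kker δ ((u : ℂ) + Complex.I * (x.im : ℂ)))

/-!
With `F(z) = sin(z − iδ)/sin(z + iδ)`, the kernel is a logarithmic derivative:
`2πi·K(z|δ) = cot(z − iδ) − cot(z + iδ) = F'(z)/F(z)`. The cut domain keeps the zeros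
`kπ ± iδ` of the two sines off the contour, so along each leg `F` solves the linear equation
`F' = 2πi·K·F`, whence `exp θ(x) = F(x)/F(−π/2) = F(x)`.
In the strip `−π < Re z < 0`, `F` is positive on the line `Re z = −π/2` and, for `δ ≠ 0`,
non-real off it (`F ≡ 1` when `δ = 0`), so `F` maps the strip into the slit plane. There
`Log ∘ F` is a primitive of `2πi·K`, and integrating along the contour, which stays in the strip, gives
`θ(x) = Log F(x) − Log F(−π/2) = Log F(x)`.
-/

open Complex Set intervalIntegral MeasureTheory
open scoped Real

section LinearODE

variable {E : Type*} [NormedAddCommGroup E] [NormedSpace ℂ E] [CompleteSpace E]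

theorem eq_exp_integral_smul_of_hasDerivAt {f : ℝ → E} {g : ℝ → ℂ} {a b : ℝ}
    (hf : ∀ t ∈ uIcc a b, HasDerivAt f (g t • f t) t) (hg : ContinuousOn g (uIcc a b)) :
    f b = exp (∫ t in a..b, g t) • f a := by
  set G : ℝ → ℂ := fun u => ∫ t in a..u, g t
  have hG : ∀ t ∈ Ioo (min a b) (max a b), HasDerivAt G (g t) t := fun t ht =>
    integral_hasDerivAt_right
      (hg.mono (uIcc_subset_uIcc_left (Ioo_subset_Icc_self ht))).intervalIntegrable
      ((hg.mono Ioo_subset_Icc_self).stronglyMeasurableAtFilter isOpen_Ioo t ht)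
      (hg.continuousAt (Icc_mem_nhds ht.1 ht.2))
  have hconst : ∫ _ in a..b, (0 : E) = exp (-G b) • f b - exp (-G a) • f a := by
    refine integral_eq_sub_of_hasDeriv_right
      ((continuousOn_primitive_interval hg.integrableOn_uIcc).neg.cexp.smul
        (HasDerivAt.continuousOn hf)) (fun t ht => ?_) intervalIntegrable_const
    convert (((hG t ht).neg.cexp).smul (hf t (Ioo_subset_Icc_self ht))).hasDerivWithinAt using 1
    rw [smul_smul, ← add_smul, mul_neg, add_neg_cancel, zero_smul]
  have hGa : G a = 0 := integral_same
  rw [intervalIntegral.integral_zero, hGa, neg_zero, exp_zero, one_smul, eq_comm, sub_eq_zero]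
    at hconst
  rw [← hconst, smul_smul, ← exp_add, add_neg_cancel, exp_zero, one_smul]

theorem comp_eq_exp_integral_smul_of_hasDerivAt {F : ℂ → E} {h : ℂ → ℂ} {γ γ' : ℝ → ℂ}
    {a b : ℝ} (hγ : ∀ t ∈ uIcc a b, HasDerivAt γ (γ' t) t) (hγ' : ContinuousOn γ' (uIcc a b))
    (hF : ∀ t ∈ uIcc a b, HasDerivAt F (h (γ t) • F (γ t)) (γ t))
    (hh : ∀ t ∈ uIcc a b, ContinuousAt h (γ t)) :
    F (γ b) = exp (∫ t in a..b, γ' t * h (γ t)) • F (γ a) := by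
  refine eq_exp_integral_smul_of_hasDerivAt (f := fun t => F (γ t)) (fun t ht => ?_)
    (hγ'.mul fun t ht =>
      (hh t ht).comp_continuousWithinAt (hγ t ht).continuousAt.continuousWithinAt)
  rw [← smul_smul]
  exact (hF t ht).scomp t (hγ t ht)

theorem integral_smul_comp_eq_sub_of_hasDerivAt {F h : ℂ → E} {γ γ' : ℝ → ℂ}
    {a b : ℝ} (hγ : ∀ t ∈ uIcc a b, HasDerivAt γ (γ' t) t) (hγ' : ContinuousOn γ' (uIcc a b))
    (hF : ∀ t ∈ uIcc a b, HasDerivAt F (h (γ t)) (γ t))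
    (hh : ∀ t ∈ uIcc a b, ContinuousAt h (γ t)) :
    ∫ t in a..b, γ' t • h (γ t) = F (γ b) - F (γ a) :=
  integral_eq_sub_of_hasDerivAt (fun t ht => (hF t ht).scomp t (hγ t ht))
    (ContinuousOn.intervalIntegrable <| hγ'.smul fun t ht =>
      (hh t ht).comp_continuousWithinAt (hγ t ht).continuousAt.continuousWithinAt)

end LinearODE

theorem Complex.sin_re (z : ℂ) : (sin z).re = Real.sin z.re * Real.cosh z.im := by
  rw [sin_eq]; simp [← ofReal_sin, ← ofReal_cos, ← ofReal_cosh, ← ofReal_sinh]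

theorem Complex.sin_im (z : ℂ) : (sin z).im = Real.cos z.re * Real.sinh z.im := by
  rw [sin_eq]; simp [← ofReal_sin, ← ofReal_cos, ← ofReal_cosh, ← ofReal_sinh]

theorem Complex.sin_ne_zero_of_im_ne_zero {z : ℂ} (h : z.im ≠ 0) : sin z ≠ 0 := by
  rw [sin_ne_zero_iff]
  rintro k rfl
  simp at h

theorem Complex.sin_ne_zero_of_re_mem_Ioo {z : ℂ} (h : z.re ∈ Ioo (-π) 0) : sin z ≠ 0 := by
  have : (sin z).re < 0 := by
    rw [sin_re]
    exact mul_neg_of_neg_of_pos (Real.sin_neg_of_neg_of_neg_pi_lt h.2 h.1) (Real.cosh_pos _)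
  exact fun h0 => by simp [h0] at this

theorem mem_Ddom_of_re_mem_Ioo (δ : ℝ) {z : ℂ} (h : z.re ∈ Ioo (-π) 0) : z ∈ Ddom δ := by
  rintro ⟨-, h' | h'⟩ <;> linarith [h.1, h.2]

theorem re_mem_Ioo_of_mem_Ddom {δ : ℝ} {z : ℂ} (hz : z ∈ Ddom δ) (him : z.im = δ ∨ z.im = -δ) :
    z.re ∈ Ioo (-π) 0 := by
  by_contra h
  rw [mem_Ioo, not_and_or, not_lt, not_lt] at h
  exact hz ⟨him, h.symm⟩

theorem neg_pi_div_two_mem_Ioo : -(π / 2) ∈ Ioo (-π) 0 :=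
  ⟨by linarith [Real.pi_pos], by linarith [Real.pi_pos]⟩

theorem add_I_mul_im_mem_Ddom {δ : ℝ} {x : ℂ} (hx : x ∈ Ddom δ) {u : ℝ}
    (hu : u ∈ uIcc (-(π / 2)) x.re) : (u : ℂ) + I * x.im ∈ Ddom δ := by
  by_cases him : x.im = δ ∨ x.im = -δ
  · refine mem_Ddom_of_re_mem_Ioo δ ?_
    simpa using ordConnected_Ioo.uIcc_subset neg_pi_div_two_mem_Ioo
      (re_mem_Ioo_of_mem_Ddom hx him) hu
  · rintro ⟨h, -⟩
    exact him (by simpa using h)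

theorem sin_ne_zero_of_mem_Ddom {δ : ℝ} {z : ℂ} (hz : z ∈ Ddom δ) :
    sin (z - I * δ) ≠ 0 ∧ sin (z + I * δ) ≠ 0 := by
  by_cases him : z.im = δ ∨ z.im = -δ
  · have hre := re_mem_Ioo_of_mem_Ddom hz him
    exact ⟨sin_ne_zero_of_re_mem_Ioo (by simpa using hre),
      sin_ne_zero_of_re_mem_Ioo (by simpa using hre)⟩
  · rw [not_or] at him
    exact ⟨sin_ne_zero_of_im_ne_zero (by simpa [sub_eq_zero] using him.1),
      sin_ne_zero_of_im_ne_zero (by simpa [add_eq_zero_iff_eq_neg] using him.2)⟩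

noncomputable def sinRatio (δ : ℝ) (z : ℂ) : ℂ := sin (z - I * δ) / sin (z + I * δ)

theorem two_pi_I_mul_Kker (δ : ℝ) (z : ℂ) :
    2 * π * I * Kker δ z = cot (z - I * δ) - cot (z + I * δ) := by
  have : (2 * π * I : ℂ) ≠ 0 := by simp [Real.pi_ne_zero]
  rw [Kker, ← mul_assoc, mul_one_div_cancel this, one_mul]

theorem continuousAt_Kker {δ : ℝ} {z : ℂ} (h : sin (z - I * δ) ≠ 0 ∧ sin (z + I * δ) ≠ 0) :
    ContinuousAt (Kker δ) z := by
  obtain ⟨h₁, h₂⟩ := h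
  unfold Kker
  simp only [cot_eq_cos_div_sin]
  fun_prop (disch := assumption)

theorem hasDerivAt_sinRatio {δ : ℝ} {z : ℂ} (h : sin (z - I * δ) ≠ 0 ∧ sin (z + I * δ) ≠ 0) :
    HasDerivAt (sinRatio δ) (2 * π * I * Kker δ z * sinRatio δ z) z := by
  obtain ⟨h₁, h₂⟩ := h
  refine (((hasDerivAt_id' z).sub_const (I * δ)).csin.fun_div
    ((hasDerivAt_id' z).add_const (I * δ)).csin h₂).congr_deriv ?_
  rw [two_pi_I_mul_Kker, sinRatio, cot_eq_cos_div_sin, cot_eq_cos_div_sin]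
  field_simp

theorem sinRatio_mem_slitPlane (δ : ℝ) {z : ℂ} (hz : z.re ∈ Ioo (-π) 0) :
    sinRatio δ z ∈ slitPlane := by
  rcases eq_or_ne δ 0 with rfl | hδ
  · simp [sinRatio, sin_ne_zero_of_re_mem_Ioo hz]
  have hsin : Real.sin z.re < 0 := Real.sin_neg_of_neg_of_neg_pi_lt hz.2 hz.1
  have hN : 0 < normSq (sin (z + I * δ)) :=
    normSq_pos.mpr (sin_ne_zero_of_re_mem_Ioo (by simpa using hz))
  rw [mem_slitPlane_iff, sinRatio, div_re, div_im]
  simp only [sin_re, sin_im, sub_re, add_re, sub_im, add_im, mul_re, mul_im, I_re, I_im, ofReal_re,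
    ofReal_im, zero_mul, one_mul, sub_zero, add_zero, zero_add]
  by_cases hcos : Real.cos z.re = 0
  · left
    simp only [hcos, zero_mul, zero_div, add_zero]
    exact div_pos (mul_pos_of_neg_of_neg (mul_neg_of_neg_of_pos hsin (Real.cosh_pos _))
      (mul_neg_of_neg_of_pos hsin (Real.cosh_pos _))) hN
  · right
    have hnum : Real.cos z.re * Real.sinh (z.im - δ) * (Real.sin z.re * Real.cosh (z.im + δ)) -
        Real.sin z.re * Real.cosh (z.im - δ) * (Real.cos z.re * Real.sinh (z.im + δ)) =
        Real.sin z.re * Real.cos z.re * Real.sinh ((z.im - δ) - (z.im + δ)) := by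
      rw [Real.sinh_sub (z.im - δ) (z.im + δ)]; ring
    rw [← sub_div, hnum]
    refine div_ne_zero (mul_ne_zero (mul_ne_zero hsin.ne hcos) ?_) hN.ne'
    rw [Ne, Real.sinh_eq_zero]
    contrapose! hδ
    linarith

theorem hasDerivAt_log_sinRatio (δ : ℝ) {z : ℂ} (hz : z.re ∈ Ioo (-π) 0) :
    HasDerivAt (fun w => log (sinRatio δ w)) (2 * π * I * Kker δ z) z := by
  have hslit := sinRatio_mem_slitPlane δ hz
  have hsin := sin_ne_zero_of_mem_Ddom (mem_Ddom_of_re_mem_Ioo δ hz)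
  refine ((hasDerivAt_sinRatio hsin).clog hslit).congr_deriv ?_
  rw [mul_div_assoc, div_self (slitPlane_ne_zero hslit), mul_one]

theorem sinRatio_neg_pi_div_two (δ : ℝ) : sinRatio δ (-(π / 2) : ℝ) = 1 := by
  have hre : ((-(π / 2) : ℝ) + I * δ : ℂ).re ∈ Ioo (-π) 0 := by
    simpa using neg_pi_div_two_mem_Ioo
  rw [sinRatio, div_eq_one_iff_eq (sin_ne_zero_of_re_mem_Ioo hre)]
  simp [sin_sub, sin_add]

theorem sinRatio_comp_eq_exp_integral_mul {δ : ℝ} {γ γ' : ℝ → ℂ} {a b : ℝ}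
    (hγ : ∀ t ∈ uIcc a b, HasDerivAt γ (γ' t) t) (hγ' : ContinuousOn γ' (uIcc a b))
    (hD : ∀ t ∈ uIcc a b, γ t ∈ Ddom δ) :
    sinRatio δ (γ b) =
      exp (∫ t in a..b, γ' t * (2 * π * I * Kker δ (γ t))) * sinRatio δ (γ a) :=
  comp_eq_exp_integral_smul_of_hasDerivAt hγ hγ'
    (fun t ht => hasDerivAt_sinRatio (sin_ne_zero_of_mem_Ddom (hD t ht)))
    (fun t ht => (continuousAt_Kker (sin_ne_zero_of_mem_Ddom (hD t ht))).const_mul _)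

theorem integral_mul_eq_log_sinRatio_sub {δ : ℝ} {γ γ' : ℝ → ℂ} {a b : ℝ}
    (hγ : ∀ t ∈ uIcc a b, HasDerivAt γ (γ' t) t) (hγ' : ContinuousOn γ' (uIcc a b))
    (hS : ∀ t ∈ uIcc a b, (γ t).re ∈ Ioo (-π) 0) :
    ∫ t in a..b, γ' t * (2 * π * I * Kker δ (γ t)) =
      log (sinRatio δ (γ b)) - log (sinRatio δ (γ a)) :=
  integral_smul_comp_eq_sub_of_hasDerivAt hγ hγ'
    (fun t ht => hasDerivAt_log_sinRatio δ (hS t ht))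
    (fun t ht => (continuousAt_Kker
      (sin_ne_zero_of_mem_Ddom (mem_Ddom_of_re_mem_Ioo δ (hS t ht)))).const_mul _)

theorem hasDerivAt_const_add_I_mul_ofReal (c : ℂ) (t : ℝ) :
    HasDerivAt (fun t : ℝ => c + I * t) I t := by
  simpa using ((hasDerivAt_id t).ofReal_comp.const_mul I).const_add c

theorem hasDerivAt_ofReal_add_const (c : ℂ) (u : ℝ) :
    HasDerivAt (fun u : ℝ => (u : ℂ) + c) 1 u := by
  simpa using (hasDerivAt_id u).ofReal_comp.add_const c

-- The factors `I` and `1` are the velocities of the two legs of the contour.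
theorem thetaFn_eq (δ : ℝ) (x : ℂ) : thetaFn δ x =
    (∫ t in (0 : ℝ)..x.im, I * (2 * π * I * Kker δ ((-(π / 2) : ℝ) + I * t))) +
      ∫ u in (-(π / 2) : ℝ)..x.re, 1 * (2 * π * I * Kker δ (u + I * x.im)) := by
  simp only [thetaFn, intervalIntegral.integral_const_mul, one_mul]
  ring

theorem exp_thetaFn {δ : ℝ} {x : ℂ} (hx : x ∈ Ddom δ) : exp (thetaFn δ x) = sinRatio δ x := by
  have hvert := sinRatio_comp_eq_exp_integral_mul (a := 0) (b := x.im)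
    (fun t _ => hasDerivAt_const_add_I_mul_ofReal ((-(π / 2) : ℝ)) t) continuousOn_const
    (fun t _ => mem_Ddom_of_re_mem_Ioo δ (by simpa using neg_pi_div_two_mem_Ioo))
  have hhoriz := sinRatio_comp_eq_exp_integral_mul (a := -(π / 2)) (b := x.re)
    (fun u _ => hasDerivAt_ofReal_add_const (I * x.im) u) continuousOn_const
    (fun u hu => add_I_mul_im_mem_Ddom hx hu)
  simp only [ofReal_zero, mul_zero, add_zero, sinRatio_neg_pi_div_two, mul_one] at hvert
  rw [thetaFn_eq, exp_add, ← hvert, mul_comm, ← hhoriz, mul_comm I, re_add_im]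

theorem thetaFn_eq_log (δ : ℝ) {x : ℂ} (hx : x.re ∈ Ioo (-π) 0) :
    thetaFn δ x = log (sinRatio δ x) := by
  have hvert := integral_mul_eq_log_sinRatio_sub (δ := δ) (a := 0) (b := x.im)
    (fun t _ => hasDerivAt_const_add_I_mul_ofReal ((-(π / 2) : ℝ)) t) continuousOn_const
    (fun t _ => by simpa using neg_pi_div_two_mem_Ioo)
  have hhoriz := integral_mul_eq_log_sinRatio_sub (δ := δ) (a := -(π / 2)) (b := x.re)
    (fun u _ => hasDerivAt_ofReal_add_const (I * x.im) u) continuousOn_const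
    (fun u hu => by simpa using ordConnected_Ioo.uIcc_subset neg_pi_div_two_mem_Ioo hx hu)
  simp only [ofReal_zero, mul_zero, add_zero, sinRatio_neg_pi_div_two, log_one, sub_zero]
    at hvert
  rw [thetaFn_eq, hvert, hhoriz, mul_comm I, re_add_im]
  ring

theorem theta_exp_and_principal_branch_general (δ : ℝ) (x : ℂ) (hx : x ∈ Ddom δ) :
    Complex.exp (thetaFn δ x) =
      Complex.sin (x - Complex.I * δ) / Complex.sin (x + Complex.I * δ) ∧
    (-Real.pi < x.re → x.re < 0 →
      thetaFn δ x =
        Complex.log (Complex.sin (x - Complex.I * δ) / Complex.sin (x + Complex.I * δ))) :=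
  ⟨exp_thetaFn hx, fun h₁ h₂ => thetaFn_eq_log δ ⟨h₁, h₂⟩⟩

/-- `exp(θ(x|δ)) = sin(x−iδ)/sin(x+iδ)` on `D(δ)`; in the strip `−π < Re x < 0`,
`θ(x|δ)` agrees with the principal branch of the logarithm of this ratio. -/
theorem theta_exp_and_principal_branch (δ : ℝ) (hδ : 0 < δ) (x : ℂ) (hx : x ∈ Ddom δ) :
    Complex.exp (thetaFn δ x) =
      Complex.sin (x - Complex.I * δ) / Complex.sin (x + Complex.I * δ) ∧
    (-Real.pi < x.re → x.re < 0 →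
      thetaFn δ x =
        Complex.log (Complex.sin (x - Complex.I * δ) / Complex.sin (x + Complex.I * δ))) :=
  theta_exp_and_principal_branch_general δ x hx
end

section
/- For every δ > 0 the following hold. (i) If x and x + π both lie in D(δ), then θ(x + π|δ) = θ(x|δ) + 2πi when |Im x| < δ, and θ(x + π|δ) = θ(x|δ) when |Im x| > δ. (ii) If x and −x both lie in D(δ), then θ(−x|δ) = −θ(x|δ) + 2πi when |Im x| < δ, and θ(−x|δ) = −θ(x|δ) when |Im x| > δ. (iii) θ(π/2|δ) = 2πi and θ(0|δ) = πi. -/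
/-!
`K(·|δ)` is even and `π`-periodic because `cot` is odd and `π`-periodic. Over one period of a
horizontal line `Im z = y` its integral is `1` if `|y| < δ` and `0` if `|y| > δ`: the function
`-iz + log (1 - e^{2iz})` is a primitive of `cot` on the upper half-plane that gains `-πi` per
period, so the integral of `cot (u + ic)` over a period is `∓πi` according to the sign of `c`.
Periodicity shifts `θ` by `2πi` times this period integral, and evenness reflects the contour of
`θ(-x)` onto that of `θ(x)` up to the same term. The special values follow from `θ(-π/2) = 0`
and `θ(-0) = θ(0)`.
-/

open Complex
open scoped Real

namespace Complex

lemma cot_add_pi (z : ℂ) : cot (z + π) = cot z := by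
  rw [cot, cot, sin_add_pi, cos_add_pi, neg_div_neg_eq]

lemma cot_neg (z : ℂ) : cot (-z) = -cot z := by
  rw [cot, cot, sin_neg, cos_neg, div_neg]

lemma continuous_cot_add_I_mul {c : ℝ} (hc : c ≠ 0) :
    Continuous fun u : ℝ => cot (u + I * c) := by
  simp only [cot]
  refine .div (by fun_prop) (by fun_prop) fun u hu => ?_
  obtain ⟨k, hk⟩ := sin_eq_zero_iff.mp hu
  exact hc (by simpa using congr_arg im hk)

noncomputable def cotPrimitive (z : ℂ) : ℂ :=
  -I * z + log (1 - exp (2 * I * z))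

lemma cotPrimitive_add_pi (z : ℂ) : cotPrimitive (z + π) = cotPrimitive z - π * I := by
  have hexp : exp (2 * I * (z + π)) = exp (2 * I * z) := by
    rw [show 2 * I * (z + π) = 2 * I * z + 2 * π * I by ring, exp_periodic]
  rw [cotPrimitive, cotPrimitive, hexp]
  ring

lemma hasDerivAt_cotPrimitive {z : ℂ} (hz : 0 < z.im) : HasDerivAt cotPrimitive (cot z) z := by
  have hnorm : ‖exp (2 * I * z)‖ < 1 := by
    rw [norm_exp, Real.exp_lt_one_iff]
    simpa using hz
  have hslit : 1 - exp (2 * I * z) ∈ slitPlane := by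
    simpa [sub_eq_add_neg] using mem_slitPlane_of_norm_lt_one (by rwa [norm_neg])
  have hne : 1 - exp (2 * I * z) ≠ 0 := slitPlane_ne_zero hslit
  have hlin : HasDerivAt (fun w : ℂ => 2 * I * w) (2 * I) z := by
    simpa using (hasDerivAt_id z).const_mul (2 * I)
  refine (((hasDerivAt_id z).const_mul (-I)).add
    ((hlin.cexp.const_sub 1).clog hslit)).congr_deriv ?_
  rw [cot_eq_exp_ratio]
  generalize exp (2 * I * z) = e at hne ⊢
  field_simp
  linear_combination (-(1 - e) - 2 * e) * I_sq

lemma integral_cot_add_I_mul_of_pos {c : ℝ} (hc : 0 < c) (a : ℝ) :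
    ∫ u in a..a + π, cot (u + I * c) = -π * I := by
  have hderiv : ∀ u ∈ Set.uIcc a (a + π),
      HasDerivAt (fun u : ℝ => cotPrimitive (u + I * c)) (cot (u + I * c)) u := fun u _ =>
    (((hasDerivAt_cotPrimitive (by simpa using hc)).comp _
      ((hasDerivAt_id _).add_const (I * c))).comp_ofReal).congr_deriv (mul_one _)
  rw [intervalIntegral.integral_eq_sub_of_hasDerivAt hderiv
    ((continuous_cot_add_I_mul hc.ne').intervalIntegrable _ _)]
  push_cast
  rw [show (a : ℂ) + π + I * c = a + I * c + π by ring, cotPrimitive_add_pi]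
  ring

lemma integral_cot_add_I_mul_of_neg {c : ℝ} (hc : c < 0) (a : ℝ) :
    ∫ u in a..a + π, cot (u + I * c) = π * I := by
  have hodd : ∀ u : ℝ, cot (u + I * c) = -cot ((-u : ℝ) + I * (-c : ℝ)) := fun u => by
    rw [← cot_neg]; push_cast; ring_nf
  simp_rw [hodd]
  rw [intervalIntegral.integral_neg,
    intervalIntegral.integral_comp_neg (fun u : ℝ => cot (u + I * (-c : ℝ))),
    show -a = -(a + π) + π by ring, integral_cot_add_I_mul_of_pos (neg_pos.mpr hc)]
  ring

end Complex

section Kernel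

lemma Kker_add_pi (δ : ℝ) (z : ℂ) : Kker δ (z + π) = Kker δ z := by
  rw [Kker, Kker, add_sub_right_comm, add_right_comm, cot_add_pi, cot_add_pi]

lemma Kker_neg (δ : ℝ) (z : ℂ) : Kker δ (-z) = Kker δ z := by
  rw [Kker, Kker, show -z - I * δ = -(z + I * δ) by ring,
    show -z + I * δ = -(z - I * δ) by ring, cot_neg, cot_neg, neg_sub_neg]

lemma Kker_add_I_mul (δ y u : ℝ) :
    Kker δ (u + I * y) =
      (1 / (2 * π * I)) * (cot (u + I * (y - δ : ℝ)) - cot (u + I * (y + δ : ℝ))) := by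
  rw [Kker]
  push_cast
  ring_nf

variable {δ : ℝ}

lemma continuous_Kker_add_I_mul {y : ℝ} (h₁ : y ≠ δ) (h₂ : y ≠ -δ) :
    Continuous fun u : ℝ => Kker δ (u + I * y) := by
  simp_rw [Kker_add_I_mul]
  exact continuous_const.mul ((continuous_cot_add_I_mul (sub_ne_zero.mpr h₁)).sub
    (continuous_cot_add_I_mul (by rwa [← sub_neg_eq_add, sub_ne_zero])))

lemma intervalIntegrable_Kker_add_I_mul {y : ℝ} (h₁ : y ≠ δ) (h₂ : y ≠ -δ) (a b : ℝ) :
    IntervalIntegrable (fun u : ℝ => Kker δ (u + I * y)) MeasureTheory.volume a b :=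
  (continuous_Kker_add_I_mul h₁ h₂).intervalIntegrable a b

lemma integral_Kker_period_eq_integral_cot_sub {y : ℝ} (hm : y - δ ≠ 0) (hp : y + δ ≠ 0)
    (a : ℝ) :
    ∫ u in a..a + π, Kker δ (u + I * y) =
      (1 / (2 * π * I)) * ((∫ u in a..a + π, cot (u + I * (y - δ : ℝ))) -
        ∫ u in a..a + π, cot (u + I * (y + δ : ℝ))) := by
  simp_rw [Kker_add_I_mul]
  rw [intervalIntegral.integral_const_mul, intervalIntegral.integral_sub
    ((continuous_cot_add_I_mul hm).intervalIntegrable _ _)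
    ((continuous_cot_add_I_mul hp).intervalIntegrable _ _)]

lemma integral_Kker_period_of_abs_lt {y : ℝ} (hy : |y| < δ) (a : ℝ) :
    ∫ u in a..a + π, Kker δ (u + I * y) = 1 := by
  obtain ⟨hlo, hhi⟩ := abs_lt.mp hy
  have hm : y - δ < 0 := by linarith
  have hp : 0 < y + δ := by linarith
  rw [integral_Kker_period_eq_integral_cot_sub hm.ne hp.ne', integral_cot_add_I_mul_of_neg hm,
    integral_cot_add_I_mul_of_pos hp]
  field_simp
  ring

lemma integral_Kker_period_of_lt_abs (hδ : 0 ≤ δ) {y : ℝ} (hy : δ < |y|) (a : ℝ) :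
    ∫ u in a..a + π, Kker δ (u + I * y) = 0 := by
  rcases lt_abs.mp hy with h | h
  · have hm : 0 < y - δ := by linarith
    have hp : 0 < y + δ := by linarith
    rw [integral_Kker_period_eq_integral_cot_sub hm.ne' hp.ne', integral_cot_add_I_mul_of_pos hm,
      integral_cot_add_I_mul_of_pos hp, sub_self, mul_zero]
  · have hm : y - δ < 0 := by linarith
    have hp : y + δ < 0 := by linarith
    rw [integral_Kker_period_eq_integral_cot_sub hm.ne hp.ne, integral_cot_add_I_mul_of_neg hm,
      integral_cot_add_I_mul_of_neg hp, sub_self, mul_zero]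

end Kernel

section Theta

variable {δ : ℝ} {x : ℂ}

lemma thetaFn_add_pi (h₁ : x.im ≠ δ) (h₂ : x.im ≠ -δ) :
    thetaFn δ (x + π) =
      thetaFn δ x + 2 * π * I * ∫ u in x.re..x.re + π, Kker δ (u + I * x.im) := by
  rw [thetaFn, thetaFn, add_im, ofReal_im, add_zero, add_re, ofReal_re,
    ← intervalIntegral.integral_add_adjacent_intervals
      (intervalIntegrable_Kker_add_I_mul h₁ h₂ _ x.re)
      (intervalIntegrable_Kker_add_I_mul h₁ h₂ x.re _)]
  ring

lemma thetaFn_neg (h₁ : x.im ≠ δ) (h₂ : x.im ≠ -δ) :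
    thetaFn δ (-x) =
      -thetaFn δ x + 2 * π * I * ∫ u in -(π / 2)..-(π / 2) + π, Kker δ (u + I * x.im) := by
  have hvert : ∫ t in (0 : ℝ)..-x.im, Kker δ ((-(π / 2) : ℝ) + I * t) =
      -∫ t in (0 : ℝ)..x.im, Kker δ ((-(π / 2) : ℝ) + I * t) := by
    -- `K` is even and `π`-periodic, hence even about `-π/2` as well
    have heven : ∀ t : ℝ, Kker δ ((-(π / 2) : ℝ) + I * (-t : ℝ)) =
        Kker δ ((-(π / 2) : ℝ) + I * t) := fun t => by
      rw [← Kker_add_pi, ← Kker_neg]; push_cast; ring_nf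
    have hreflect := intervalIntegral.integral_comp_neg (a := 0) (b := x.im)
      fun t : ℝ => Kker δ ((-(π / 2) : ℝ) + I * t)
    simp only [heven, neg_zero] at hreflect
    rw [hreflect, intervalIntegral.integral_symm]
  have hhoriz : ∫ u in -(π / 2)..-x.re, Kker δ (u + I * (-x.im : ℝ)) =
      ∫ u in x.re..π / 2, Kker δ (u + I * x.im) := by
    have heven : ∀ u : ℝ, Kker δ ((-u : ℝ) + I * x.im) = Kker δ (u + I * (-x.im : ℝ)) :=
      fun u => by rw [← Kker_neg]; push_cast; ring_nf
    have hreflect := intervalIntegral.integral_comp_neg (a := -(π / 2)) (b := -x.re)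
      fun u : ℝ => Kker δ (u + I * x.im)
    simpa only [heven, neg_neg] using hreflect
  rw [thetaFn, thetaFn, neg_im, neg_re, hvert, hhoriz, show -(π / 2) + π = π / 2 by ring,
    ← intervalIntegral.integral_add_adjacent_intervals (b := x.re) (c := π / 2)
      (intervalIntegrable_Kker_add_I_mul h₁ h₂ (-(π / 2)) x.re)
      (intervalIntegrable_Kker_add_I_mul h₁ h₂ x.re _)]
  ring

lemma thetaFn_neg_pi_div_two : thetaFn δ ((-(π / 2) : ℝ) : ℂ) = 0 := by
  simp [thetaFn]

lemma thetaFn_pi_div_two (hδ : 0 < δ) : thetaFn δ ((π / 2 : ℝ) : ℂ) = 2 * π * I := by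
  rw [show ((π / 2 : ℝ) : ℂ) = ((-(π / 2) : ℝ) : ℂ) + π by push_cast; ring,
    thetaFn_add_pi (by simpa using hδ.ne) (by simpa using hδ.ne'), thetaFn_neg_pi_div_two,
    ofReal_re, ofReal_im, integral_Kker_period_of_abs_lt (by simpa using hδ)]
  ring

lemma thetaFn_zero (hδ : 0 < δ) : thetaFn δ 0 = π * I := by
  have h := thetaFn_neg (x := 0) (by simpa using hδ.ne) (by simpa using hδ.ne')
  rw [neg_zero, zero_im, integral_Kker_period_of_abs_lt (by simpa using hδ)] at h
  linear_combination h / 2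

end Theta

/-- Quasi-periodicity and parity of `θ(·|δ)`, and special values `θ(π/2|δ) = 2πi`,
`θ(0|δ) = πi`. -/
theorem theta_quasiperiodicity_parity_values (δ : ℝ) (hδ : 0 < δ) :
    (∀ x : ℂ, x ∈ Ddom δ → x + (Real.pi : ℂ) ∈ Ddom δ →
      (|x.im| < δ → thetaFn δ (x + (Real.pi : ℂ)) = thetaFn δ x + 2 * Real.pi * Complex.I) ∧
      (δ < |x.im| → thetaFn δ (x + (Real.pi : ℂ)) = thetaFn δ x)) ∧
    (∀ x : ℂ, x ∈ Ddom δ → -x ∈ Ddom δ →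
      (|x.im| < δ → thetaFn δ (-x) = -thetaFn δ x + 2 * Real.pi * Complex.I) ∧
      (δ < |x.im| → thetaFn δ (-x) = -thetaFn δ x)) ∧
    thetaFn δ ((Real.pi / 2 : ℝ) : ℂ) = 2 * Real.pi * Complex.I ∧
    thetaFn δ 0 = Real.pi * Complex.I := by
  have off_cuts : ∀ {y : ℝ}, |y| ≠ δ → y ≠ δ ∧ y ≠ -δ := fun hy =>
    not_or.mp ((abs_eq hδ.le).not.mp hy)
  refine ⟨fun x _ _ => ⟨fun hx => ?_, fun hx => ?_⟩, fun x _ _ => ⟨fun hx => ?_, fun hx => ?_⟩,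
    thetaFn_pi_div_two hδ, thetaFn_zero hδ⟩
  · rw [thetaFn_add_pi (off_cuts hx.ne).1 (off_cuts hx.ne).2,
      integral_Kker_period_of_abs_lt hx, mul_one]
  · rw [thetaFn_add_pi (off_cuts hx.ne').1 (off_cuts hx.ne').2,
      integral_Kker_period_of_lt_abs hδ.le hx, mul_zero, add_zero]
  · rw [thetaFn_neg (off_cuts hx.ne).1 (off_cuts hx.ne).2,
      integral_Kker_period_of_abs_lt hx, mul_one]
  · rw [thetaFn_neg (off_cuts hx.ne').1 (off_cuts hx.ne').2,
      integral_Kker_period_of_lt_abs hδ.le hx, mul_zero, add_zero]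
end

section
/- For every real x, the series defining ε converges absolutely and ε solves the dressed-energy linear integral equation ε(x) = ε₀(x) − ∫_{−π/2}^{π/2} K(x − y|γ)·ε(y) dy, where ε₀(x) := h − 4J·sinh²(γ)/(cosh(γ) − cos(2x)). -/
/-- The dressed energy `ε(x) = h/2 − 2J·sinh(γ)·Σ_{n∈ℤ} cos(2nx)/cosh(nγ)`. -/
noncomputable def dressedEnergy (γ J h : ℝ) (x : ℝ) : ℝ :=
  h / 2 - 2 * J * Real.sinh γ * ∑' n : ℤ, Real.cos (2 * n * x) / Real.cosh (n * γ)

open MeasureTheory Real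

theorem cos_lt_cosh {α : ℝ} (hα : α ≠ 0) (θ : ℝ) : cos θ < cosh α :=
  (cos_le_one θ).trans_lt (one_lt_cosh.2 hα)

theorem summable_pow_natAbs {r : ℝ} (hr : |r| < 1) : Summable fun n : ℤ => r ^ n.natAbs :=
  .of_nat_of_neg (by simpa using summable_geometric_of_abs_lt_one hr)
    (by simpa using summable_geometric_of_abs_lt_one hr)

theorem hasSum_pow_natAbs_mul_cos {r : ℝ} (hr : |r| < 1) (θ : ℝ) :
    HasSum (fun n : ℤ => r ^ n.natAbs * cos (n * θ))
      ((1 - r ^ 2) / (1 - 2 * r * cos θ + r ^ 2)) := by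
  set D := 1 - 2 * r * cos θ + r ^ 2
  set z : ℂ := r * Complex.exp (θ * Complex.I)
  have hz : ‖z‖ < 1 := by simpa [z, Complex.norm_exp_ofReal_mul_I] using hr
  have hre_pow (n : ℕ) : (z ^ n).re = r ^ n * cos (n * θ) := by
    rw [mul_pow, ← Complex.exp_nat_mul, ← Complex.ofReal_pow,
      show (n : ℂ) * (θ * Complex.I) = (n * θ : ℝ) * Complex.I by push_cast; ring,
      Complex.re_ofReal_mul, Complex.exp_ofReal_mul_I_re]
  have hre_one_sub : (1 - z).re = 1 - r * cos θ := by simp [z, Complex.exp_ofReal_mul_I_re]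
  have him_one_sub : (1 - z).im = -(r * sin θ) := by simp [z, Complex.exp_ofReal_mul_I_im]
  have hnormSq : Complex.normSq (1 - z) = D := by
    rw [Complex.normSq_apply, hre_one_sub, him_one_sub]
    linear_combination r ^ 2 * sin_sq_add_cos_sq θ
  have hD : D ≠ 0 := by
    rw [← hnormSq, Ne, Complex.normSq_eq_zero, sub_eq_zero]
    rintro h
    simp [← h] at hz
  have hnat : HasSum (fun n : ℕ => r ^ n * cos (n * θ)) ((1 - r * cos θ) / D) := by
    rw [← hre_one_sub, ← hnormSq, ← Complex.inv_re]
    simpa only [Complex.reCLM_apply, hre_pow] using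
      Complex.reCLM.hasSum (hasSum_geometric_of_norm_lt_one hz)
  have hneg : HasSum (fun n : ℕ => r ^ (-(n : ℤ)).natAbs * cos ((-(n : ℤ) : ℤ) * θ))
      ((1 - r * cos θ) / D) := by
    simpa using hnat
  have hval : (1 - r ^ 2) / D =
      (1 - r * cos θ) / D + (1 - r * cos θ) / D - r ^ (0 : ℤ).natAbs * cos ((0 : ℤ) * θ) := by
    simp only [Int.natAbs_zero, pow_zero, Int.cast_zero, zero_mul, cos_zero, mul_one]
    rw [← add_div, div_sub_one hD]
    ring
  rw [hval]
  exact HasSum.of_nat_of_neg (by simpa using hnat) hneg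

theorem hasSum_exp_neg_pow_natAbs_mul_cos {α : ℝ} (hα : 0 < α) (θ : ℝ) :
    HasSum (fun n : ℤ => exp (-α) ^ n.natAbs * cos (n * θ)) (sinh α / (cosh α - cos θ)) := by
  have hr : |exp (-α)| < 1 := by rw [abs_of_pos (exp_pos _)]; exact exp_lt_one_iff.2 (by linarith)
  convert hasSum_pow_natAbs_mul_cos hr θ using 1
  have hD : cosh α - cos θ ≠ 0 := (sub_pos.2 (cos_lt_cosh hα.ne' θ)).ne'
  have hD' : 1 - 2 * exp (-α) * cos θ + exp (-α) ^ 2 ≠ 0 := by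
    rw [show 1 - 2 * exp (-α) * cos θ + exp (-α) ^ 2 = 2 * exp (-α) * (cosh α - cos θ) by
      rw [cosh_eq, exp_neg]; field_simp; ring]
    exact mul_ne_zero (mul_ne_zero two_ne_zero (exp_pos _).ne') hD
  rw [div_eq_div_iff hD hD', sinh_eq, cosh_eq, exp_neg]
  field_simp
  ring

theorem inv_cosh_le_two_mul_exp_neg_abs (t : ℝ) : (cosh t)⁻¹ ≤ 2 * exp (-|t|) := by
  rw [inv_le_iff_one_le_mul₀ (cosh_pos t), ← cosh_abs, cosh_eq, exp_neg]
  field_simp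
  linarith

theorem summable_inv_cosh_int_mul {γ : ℝ} (hγ : γ ≠ 0) :
    Summable fun n : ℤ => (cosh (n * γ))⁻¹ := by
  refine .of_nonneg_of_le (fun n => (inv_pos.2 (cosh_pos _)).le)
    (fun n => (inv_cosh_le_two_mul_exp_neg_abs _).trans_eq ?_)
    ((summable_pow_natAbs (r := exp (-|γ|)) ?_).mul_left 2)
  · rw [abs_mul, ← Int.cast_abs, ← Nat.cast_natAbs, ← exp_nat_mul, mul_neg]
  · rw [abs_of_pos (exp_pos _), exp_lt_one_iff, neg_lt_zero, abs_pos]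
    exact hγ

theorem summable_abs_cos_div_cosh {γ : ℝ} (hγ : γ ≠ 0) (x : ℝ) :
    Summable fun n : ℤ => |cos (2 * n * x) / cosh (n * γ)| := by
  refine (summable_inv_cosh_int_mul hγ).of_nonneg_of_le (fun n => abs_nonneg _) fun n => ?_
  rw [abs_div, abs_of_pos (cosh_pos _), div_eq_mul_inv]
  grw [abs_cos_le_one, one_mul]

theorem cosh_natAbs_mul (n : ℤ) (γ : ℝ) : cosh (n.natAbs * γ) = cosh (n * γ) := by
  rw [Nat.cast_natAbs, Int.cast_abs]
  rcases abs_choice (n : ℝ) with h | h <;> simp [h]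

theorem one_add_exp_neg_two_mul_pow_natAbs (γ : ℝ) (n : ℤ) :
    1 + exp (-(2 * γ)) ^ n.natAbs = 2 * exp (-γ) ^ n.natAbs * cosh (n * γ) := by
  rw [← cosh_natAbs_mul, cosh_eq, ← exp_nat_mul, ← exp_nat_mul]
  set t := (n.natAbs : ℝ) * γ
  have h1 : exp (-t) * exp t = 1 := by rw [← exp_add]; simp
  have h2 : exp (n.natAbs * -(2 * γ)) = exp (-t) * exp (-t) := by
    rw [← exp_add]; congr 1; ring
  rw [h2, show (n.natAbs : ℝ) * -γ = -t by ring]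
  linear_combination -h1

theorem hasSum_intervalIntegral_of_norm_le {ι E : Type*} [Countable ι] [NormedAddCommGroup E]
    [NormedSpace ℝ E] {F : ι → ℝ → E} {f : ℝ → E} {C : ι → ℝ} (a b : ℝ)
    (hF : ∀ i, Continuous (F i)) (hFC : ∀ i y, ‖F i y‖ ≤ C i) (hC : Summable C)
    (hf : ∀ y, HasSum (fun i => F i y) (f y)) :
    HasSum (fun i => ∫ y in a..b, F i y) (∫ y in a..b, f y) :=
  intervalIntegral.hasSum_integral_of_dominated_convergence (fun i _ => C i)
    (fun i => (hF i).aestronglyMeasurable) (fun i => ae_of_all _ fun y _ => hFC i y)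
    (ae_of_all _ fun _ _ => hC) intervalIntegrable_const (ae_of_all _ fun y _ => hf y)

theorem integral_cos_add_two_mul_int (c : ℝ) (k : ℤ) :
    ∫ y in -(π / 2)..π / 2, cos (c + 2 * k * y) = if k = 0 then π * cos c else 0 := by
  split_ifs with hk
  · simp [hk]
  have hk' : (2 * k : ℝ) ≠ 0 := by exact_mod_cast mul_ne_zero two_ne_zero hk
  rw [intervalIntegral.integral_comp_add_mul cos hk', integral_cos,
    show c + 2 * k * (π / 2) = c + 2 * k * -(π / 2) + k * (2 * π) by ring,
    sin_add_int_mul_two_pi, sub_self, smul_zero]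

theorem integral_cos_mul_cos (x : ℝ) (m n : ℤ) :
    ∫ y in -(π / 2)..π / 2, cos (2 * m * (x - y)) * cos (2 * n * y) =
      π / 2 * cos (2 * m * x) * ((if m = n then 1 else 0) + (if m = -n then 1 else 0)) := by
  have hprod (y : ℝ) : cos (2 * m * (x - y)) * cos (2 * n * y) =
      (cos (2 * m * x + 2 * (n - m : ℤ) * y) + cos (2 * m * x + 2 * (-(m + n) : ℤ) * y)) / 2 := by
    rw [show 2 * m * x + 2 * (n - m : ℤ) * y = 2 * m * (x - y) + 2 * n * y by push_cast; ring,
      show 2 * m * x + 2 * (-(m + n) : ℤ) * y = 2 * m * (x - y) - 2 * n * y by push_cast; ring,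
      cos_add, cos_sub]
    ring
  simp_rw [hprod]
  rw [intervalIntegral.integral_div, intervalIntegral.integral_add
    ((by fun_prop : Continuous _).intervalIntegrable _ _)
    ((by fun_prop : Continuous _).intervalIntegrable _ _),
    integral_cos_add_two_mul_int, integral_cos_add_two_mul_int]
  split_ifs <;> first | omega | ring1

noncomputable def KkerReal (δ u : ℝ) : ℝ :=
  sinh (2 * δ) / (π * (cosh (2 * δ) - cos (2 * u)))

theorem Kker_ofReal (δ u : ℝ) : Kker δ u = KkerReal δ u := by
  rcases eq_or_ne δ 0 with rfl | hδ
  · simp [Kker, KkerReal]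
  set A : ℂ := u - Complex.I * δ
  set B : ℂ := u + Complex.I * δ
  have hcos_sub : Complex.cos (A - B) = cosh (2 * δ) := by
    rw [show A - B = -((2 * δ : ℝ) * Complex.I) by push_cast; ring, Complex.cos_neg,
      Complex.cos_mul_I, Complex.ofReal_cosh]
  have hcos_add : Complex.cos (A + B) = cos (2 * u) := by
    rw [show A + B = (2 * u : ℝ) by push_cast; ring, Complex.ofReal_cos]
  have hsin_sub : Complex.sin (B - A) = sinh (2 * δ) * Complex.I := by
    rw [show B - A = (2 * δ : ℝ) * Complex.I by push_cast; ring, Complex.sin_mul_I,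
      Complex.ofReal_sinh]
  have hnum : Complex.cos A * Complex.sin B - Complex.sin A * Complex.cos B =
      sinh (2 * δ) * Complex.I := by
    linear_combination hsin_sub - Complex.sin_sub B A
  have hden : Complex.sin A * Complex.sin B = ((cosh (2 * δ) : ℂ) - (cos (2 * u) : ℂ)) / 2 := by
    linear_combination (Complex.cos_add A B - Complex.cos_sub A B + hcos_sub - hcos_add) / 2
  have hsinAB : Complex.sin A * Complex.sin B ≠ 0 := by
    rw [hden, ← Complex.ofReal_sub, ← Complex.ofReal_ofNat, ← Complex.ofReal_div,
      Complex.ofReal_ne_zero]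
    exact div_ne_zero (sub_pos.2 (cos_lt_cosh (mul_ne_zero two_ne_zero hδ) _)).ne' two_ne_zero
  show 1 / (2 * (π : ℂ) * Complex.I) * (Complex.cot A - Complex.cot B) = _
  rw [Complex.cot_eq_cos_div_sin, Complex.cot_eq_cos_div_sin,
    div_sub_div _ _ (left_ne_zero_of_mul hsinAB) (right_ne_zero_of_mul hsinAB), hnum, hden,
    KkerReal, Complex.ofReal_div, Complex.ofReal_mul, Complex.ofReal_sub]
  have hπ : (π : ℂ) ≠ 0 := by exact_mod_cast pi_ne_zero
  field_simp

theorem intervalIntegral_Kker_mul_ofReal (δ a b x : ℝ) (f : ℝ → ℝ) :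
    ∫ y in a..b, Kker δ ((x : ℂ) - (y : ℂ)) * (f y : ℂ) =
      ((∫ y in a..b, KkerReal δ (x - y) * f y : ℝ) : ℂ) := by
  simp_rw [← Complex.ofReal_sub, Kker_ofReal, ← Complex.ofReal_mul]
  exact intervalIntegral.integral_ofReal

theorem hasSum_KkerReal {δ : ℝ} (hδ : 0 < δ) (u : ℝ) :
    HasSum (fun m : ℤ => exp (-(2 * δ)) ^ m.natAbs / π * cos (2 * m * u)) (KkerReal δ u) := by
  have h := (hasSum_exp_neg_pow_natAbs_mul_cos (by positivity : 0 < 2 * δ) (2 * u)).div_const π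
  rw [KkerReal, ← div_div, div_right_comm]
  simpa only [div_mul_eq_mul_div, mul_left_comm _ (2 : ℝ), mul_assoc] using h

theorem continuous_KkerReal {δ : ℝ} (hδ : δ ≠ 0) : Continuous (KkerReal δ) :=
  continuous_const.div (by fun_prop) fun u =>
    mul_ne_zero pi_ne_zero (sub_pos.2 (cos_lt_cosh (mul_ne_zero two_ne_zero hδ) _)).ne'

theorem abs_KkerReal_le {δ : ℝ} (hδ : 0 < δ) (u : ℝ) : |KkerReal δ u| ≤ KkerReal δ 0 := by
  have hsinh : 0 ≤ sinh (2 * δ) := sinh_nonneg_iff.2 (by positivity)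
  have hD (v : ℝ) : 0 < π * (cosh (2 * δ) - cos (2 * v)) :=
    mul_pos pi_pos (sub_pos.2 (cos_lt_cosh (by positivity) _))
  rw [KkerReal, KkerReal, abs_of_nonneg (div_nonneg hsinh (hD u).le)]
  refine div_le_div_of_nonneg_left hsinh (hD 0) ?_
  rw [mul_zero, cos_zero]
  gcongr
  exact cos_le_one _

theorem integral_KkerReal_mul_cos {δ : ℝ} (hδ : 0 < δ) (x : ℝ) (n : ℤ) :
    ∫ y in -(π / 2)..π / 2, KkerReal δ (x - y) * cos (2 * n * y) =
      exp (-(2 * δ)) ^ n.natAbs * cos (2 * n * x) := by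
  set a := exp (-(2 * δ))
  have ha : |a| < 1 := by
    rw [abs_of_pos (exp_pos _), exp_lt_one_iff]
    linarith
  have hseries := hasSum_intervalIntegral_of_norm_le (-(π / 2)) (π / 2)
    (F := fun (m : ℤ) y => a ^ m.natAbs / π * cos (2 * m * (x - y)) * cos (2 * n * y))
    (C := fun m : ℤ => a ^ m.natAbs / π) (fun m => by fun_prop)
    (fun m y => by
      rw [norm_mul, norm_mul, Real.norm_of_nonneg (by positivity)]
      grw [Real.norm_eq_abs, Real.norm_eq_abs, abs_cos_le_one, abs_cos_le_one, mul_one, mul_one])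
    ((summable_pow_natAbs ha).div_const π)
    (fun y => (hasSum_KkerReal hδ (x - y)).mul_right (cos (2 * n * y)))
  have hterm (m : ℤ) :
      ∫ y in -(π / 2)..π / 2, a ^ m.natAbs / π * cos (2 * m * (x - y)) * cos (2 * n * y) =
        (if m = n then a ^ n.natAbs * cos (2 * n * x) / 2 else 0) +
          (if m = -n then a ^ n.natAbs * cos (2 * n * x) / 2 else 0) := by
    simp_rw [mul_assoc (a ^ m.natAbs / π)]
    rw [intervalIntegral.integral_const_mul, integral_cos_mul_cos]
    split_ifs <;> subst_vars <;>
      simp only [Int.natAbs_neg, Int.cast_neg, mul_neg, neg_mul, cos_neg, add_zero, zero_add,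
        ← two_mul, mul_one, mul_zero] <;>
      field_simp
  simp_rw [hterm] at hseries
  exact hseries.unique (by
    simpa only [add_halves] using (hasSum_ite_eq n (a ^ n.natAbs * cos (2 * n * x) / 2)).add
      (hasSum_ite_eq (-n) (a ^ n.natAbs * cos (2 * n * x) / 2)))

theorem hasSum_integral_KkerReal_mul {δ : ℝ} (hδ : 0 < δ) {c : ℤ → ℝ} (hc : Summable c)
    {f : ℝ → ℝ} (hf : ∀ y, HasSum (fun n => c n * cos (2 * n * y)) (f y)) (x : ℝ) :
    HasSum (fun n => c n * (exp (-(2 * δ)) ^ n.natAbs * cos (2 * n * x)))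
      (∫ y in -(π / 2)..π / 2, KkerReal δ (x - y) * f y) := by
  have hK := continuous_KkerReal hδ.ne'
  have hK0 : 0 ≤ KkerReal δ 0 := (abs_nonneg _).trans (abs_KkerReal_le hδ 0)
  have hseries := hasSum_intervalIntegral_of_norm_le (-(π / 2)) (π / 2)
    (F := fun (n : ℤ) y => c n * (KkerReal δ (x - y) * cos (2 * n * y)))
    (C := fun n => |c n| * KkerReal δ 0) (fun n => by fun_prop)
    (fun n y => by
      rw [Real.norm_eq_abs, abs_mul, abs_mul]
      grw [abs_KkerReal_le hδ, abs_cos_le_one, mul_one])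
    (hc.abs.mul_right _)
    (fun y => by simpa only [mul_left_comm] using (hf y).mul_left (KkerReal δ (x - y)))
  simpa only [intervalIntegral.integral_const_mul, integral_KkerReal_mul_cos hδ] using hseries

noncomputable def dressedEnergyCoeff (γ J h : ℝ) (n : ℤ) : ℝ :=
  (if n = 0 then h / 2 else 0) - 2 * J * sinh γ / cosh (n * γ)

noncomputable def bareEnergy (γ J h x : ℝ) : ℝ :=
  h - 4 * J * sinh γ ^ 2 / (cosh γ - cos (2 * x))

noncomputable def bareEnergyCoeff (γ J h : ℝ) (n : ℤ) : ℝ :=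
  (if n = 0 then h else 0) - 4 * J * sinh γ * exp (-γ) ^ n.natAbs

theorem summable_dressedEnergyCoeff {γ : ℝ} (hγ : γ ≠ 0) (J h : ℝ) :
    Summable (dressedEnergyCoeff γ J h) :=
  (hasSum_ite_eq 0 (h / 2)).summable.sub ((summable_inv_cosh_int_mul hγ).mul_left (2 * J * sinh γ))

theorem hasSum_dressedEnergy {γ : ℝ} (hγ : γ ≠ 0) (J h y : ℝ) :
    HasSum (fun n => dressedEnergyCoeff γ J h n * cos (2 * n * y)) (dressedEnergy γ J h y) := by
  have hS := (summable_abs_cos_div_cosh hγ y).of_abs.hasSum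
  refine ((hasSum_ite_eq 0 (h / 2)).sub (hS.mul_left (2 * J * sinh γ))).congr_fun fun n => ?_
  rw [dressedEnergyCoeff]
  rcases eq_or_ne n 0 with rfl | hn
  · simp
  · simp [hn]
    ring

theorem hasSum_bareEnergy {γ : ℝ} (hγ : 0 < γ) (J h x : ℝ) :
    HasSum (fun n => bareEnergyCoeff γ J h n * cos (2 * n * x)) (bareEnergy γ J h x) := by
  have hB : HasSum (fun n : ℤ => exp (-γ) ^ n.natAbs * cos (2 * n * x))
      (sinh γ / (cosh γ - cos (2 * x))) := by
    simpa only [mul_left_comm _ (2 : ℝ), mul_assoc] using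
      hasSum_exp_neg_pow_natAbs_mul_cos hγ (2 * x)
  rw [bareEnergy, show h - 4 * J * sinh γ ^ 2 / (cosh γ - cos (2 * x)) =
    h - 4 * J * sinh γ * (sinh γ / (cosh γ - cos (2 * x))) by ring]
  refine ((hasSum_ite_eq 0 h).sub (hB.mul_left (4 * J * sinh γ))).congr_fun fun n => ?_
  rw [bareEnergyCoeff]
  rcases eq_or_ne n 0 with rfl | hn
  · simp
  · simp [hn]
    ring

theorem dressedEnergyCoeff_mul_one_add (γ J h : ℝ) (n : ℤ) :
    dressedEnergyCoeff γ J h n * (1 + exp (-(2 * γ)) ^ n.natAbs) = bareEnergyCoeff γ J h n := by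
  rw [one_add_exp_neg_two_mul_pow_natAbs, dressedEnergyCoeff, bareEnergyCoeff]
  rcases eq_or_ne n 0 with rfl | hn
  · simp
    ring
  · simp [hn]
    field_simp
    ring

theorem dressedEnergy_integral_equation_general (γ J h : ℝ) (hγ : 0 < γ) (x : ℝ) :
    Summable (fun n : ℤ => |Real.cos (2 * n * x) / Real.cosh (n * γ)|) ∧
    (dressedEnergy γ J h x : ℂ) =
      ((h - 4 * J * Real.sinh γ ^ 2 / (Real.cosh γ - Real.cos (2 * x)) : ℝ) : ℂ) -
        ∫ y in (-(Real.pi/2) : ℝ)..(Real.pi/2 : ℝ),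
          Kker γ ((x : ℂ) - (y : ℂ)) * (dressedEnergy γ J h y : ℂ) := by
  refine ⟨summable_abs_cos_div_cosh hγ.ne' x, ?_⟩
  have hε := hasSum_dressedEnergy hγ.ne' J h
  have hKε := hasSum_integral_KkerReal_mul hγ (summable_dressedEnergyCoeff hγ.ne' J h) hε x
  have hsum : HasSum (fun n => bareEnergyCoeff γ J h n * cos (2 * n * x))
      (dressedEnergy γ J h x +
        ∫ y in -(π / 2)..π / 2, KkerReal γ (x - y) * dressedEnergy γ J h y) :=
    ((hε x).add hKε).congr_fun fun n => by rw [← dressedEnergyCoeff_mul_one_add]; ring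
  rw [intervalIntegral_Kker_mul_ofReal, ← Complex.ofReal_sub, Complex.ofReal_inj,
    ← bareEnergy, (hasSum_bareEnergy hγ J h x).unique hsum]
  ring

/-- The series defining `ε` converges absolutely and `ε` solves the dressed-energy linear
integral equation with bare energy `ε₀(x) = h − 4J·sinh²(γ)/(cosh(γ) − cos(2x))`. -/
theorem dressedEnergy_integral_equation (γ J h : ℝ) (hγ : 0 < γ) (hJ : 0 < J) (x : ℝ) :
    Summable (fun n : ℤ => |Real.cos (2 * n * x) / Real.cosh (n * γ)|) ∧
    (dressedEnergy γ J h x : ℂ) =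
      ((h - 4 * J * Real.sinh γ ^ 2 / (Real.cosh γ - Real.cos (2 * x)) : ℝ) : ℂ) -
        ∫ y in (-(Real.pi/2) : ℝ)..(Real.pi/2 : ℝ),
          Kker γ ((x : ℂ) - (y : ℂ)) * (dressedEnergy γ J h y : ℂ) :=
  dressedEnergy_integral_equation_general γ J h hγ x
end
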